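/- arXiv:2005.02508 — 13 statements merged into one kernel-verified Lean document; each statement's English description precedes it below -/
import Mathlib

section
/- Let N and H be inverse monoids and let α be an action of inverse monoids of H on N. Then the λ-semidirect product N ⋉_α H is a monoid: (i) the pair (1,1) lies in the underlying set; (ii) the underlying set is closed under the multiplication, i.e. if α (h₁ * inv h₁) n₁ = n₁ and α (h₂ * inv h₂) n₂ = n₂ then the product pair ((α ((h₁*h₂) * inv (h₁*h₂)) n₁) * (α h₁ n₂), h₁*h₂) again satisfies the defining condition; (iii) the multiplication is associative on this set; and (iv) (1,1) is a two-sided identity for it. -/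
/-- An inverse monoid structure: a monoid `M` with a map `inv` such that
`a * inv a * a = a`, `inv a * a * inv a = inv a`, and any two idempotents commute. -/
structure IsInverseMonoid (M : Type*) [Monoid M] (inv : M → M) : Prop where
  mul_inv_mul : ∀ a : M, a * inv a * a = a
  inv_mul_inv : ∀ a : M, inv a * a * inv a = inv a
  idem_comm : ∀ e f : M, e * e = e → f * f = f → e * f = f * e

/-- An action of inverse monoids of `H` on `N`. -/
structure IsLambdaAction {H N : Type*} [Monoid H] [Monoid N] (α : H → N → N) : Prop where
  act_mul : ∀ (h : H) (n n' : N), α h (n * n') = α h n * α h n'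
  act_comp : ∀ (h h' : H) (n : N), α (h * h') n = α h (α h' n)
  act_one : ∀ n : N, α 1 n = n
/-- Membership in the λ-semidirect product: `(n,h)` with `α (h * inv h) n = n`. -/
def lmem {N H : Type*} [Monoid N] [Monoid H] (invH : H → H) (α : H → N → N)
    (p : N × H) : Prop :=
  α (p.2 * invH p.2) p.1 = p.1

/-- The λ-semidirect product multiplication
`(n₁,h₁)·(n₂,h₂) = ((α ((h₁h₂)(h₁h₂)⁻¹) n₁) * (α h₁ n₂), h₁h₂)`. -/
def lmul {N H : Type*} [Monoid N] [Monoid H] (invH : H → H) (α : H → N → N)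
    (p q : N × H) : N × H :=
  (α ((p.2 * q.2) * invH (p.2 * q.2)) p.1 * α p.2 q.1, p.2 * q.2)

section Helpers
variable {M : Type*} [Monoid M] {inv : M → M}

theorem im_idem (hM : IsInverseMonoid M inv) (a : M) :
    (a * inv a) * (a * inv a) = a * inv a := by
  rw [show (a * inv a) * (a * inv a) = (a * inv a * a) * inv a by simp [mul_assoc],
    hM.mul_inv_mul]

theorem im_idem' (hM : IsInverseMonoid M inv) (a : M) :
    (inv a * a) * (inv a * a) = inv a * a := by
  rw [show (inv a * a) * (inv a * a) = (inv a * a * inv a) * a by simp [mul_assoc],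
    hM.inv_mul_inv]

theorem im_unique (hM : IsInverseMonoid M inv) (a x y : M)
    (hx1 : a * x * a = a) (hx2 : x * a * x = x)
    (hy1 : a * y * a = a) (hy2 : y * a * y = y) : x = y := by
  have ex : (x*a)*(x*a) = x*a := by
    rw [show (x*a)*(x*a) = (x*a*x)*a by simp [mul_assoc], hx2]
  have ey : (y*a)*(y*a) = y*a := by
    rw [show (y*a)*(y*a) = (y*a*y)*a by simp [mul_assoc], hy2]
  have eax : (a*x)*(a*x) = a*x := by
    rw [show (a*x)*(a*x) = (a*x*a)*x by simp [mul_assoc], hx1]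
  have eay : (a*y)*(a*y) = a*y := by
    rw [show (a*y)*(a*y) = (a*y*a)*y by simp [mul_assoc], hy1]
  have s1 : x = y * (a*x) := by
    calc x = x*a*x := hx2.symm
    _ = x*(a*y*a)*x := by rw [hy1]
    _ = ((x*a)*(y*a))*x := by simp [mul_assoc]
    _ = ((y*a)*(x*a))*x := by rw [hM.idem_comm _ _ ex ey]
    _ = y*((a*x*a)*x) := by simp [mul_assoc]
    _ = y*(a*x) := by rw [hx1]
  have s2 : y = y * (a*x) := by
    calc y = y*a*y := hy2.symm
    _ = y*(a*x*a)*y := by rw [hx1]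
    _ = y*((a*x)*(a*y)) := by simp [mul_assoc]
    _ = y*((a*y)*(a*x)) := by rw [hM.idem_comm _ _ eax eay]
    _ = (y*a*y)*(a*x) := by simp [mul_assoc]
    _ = y*(a*x) := by rw [hy2]
  rw [s1, ← s2]

theorem im_inv_mul (hM : IsInverseMonoid M inv) (a b : M) :
    inv (a*b) = inv b * inv a := by
  refine im_unique hM (a*b) _ _ (hM.mul_inv_mul _) (hM.inv_mul_inv _) ?_ ?_
  · calc a*b*(inv b*inv a)*(a*b) = a*(((b*inv b)*(inv a*a))*b) := by simp [mul_assoc]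
    _ = a*(((inv a*a)*(b*inv b))*b) := by
        rw [hM.idem_comm _ _ (im_idem hM b) (im_idem' hM a)]
    _ = (a*inv a*a)*(b*inv b*b) := by simp [mul_assoc]
    _ = a*b := by rw [hM.mul_inv_mul, hM.mul_inv_mul]
  · calc (inv b*inv a)*(a*b)*(inv b*inv a)
        = inv b*(((inv a*a)*(b*inv b))*inv a) := by simp [mul_assoc]
    _ = inv b*(((b*inv b)*(inv a*a))*inv a) := by
        rw [hM.idem_comm _ _ (im_idem' hM a) (im_idem hM b)]
    _ = (inv b*b*inv b)*(inv a*a*inv a) := by simp [mul_assoc]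
    _ = inv b*inv a := by rw [hM.inv_mul_inv, hM.inv_mul_inv]

theorem im_L6 (hM : IsInverseMonoid M inv) (a b : M) :
    (((a*b)*inv (a*b))*a)*(b*inv b) = a*(b*inv b) := by
  calc (((a*b)*inv (a*b))*a)*(b*inv b)
      = (((a*b)*(inv b*inv a))*a)*(b*inv b) := by rw [im_inv_mul hM]
  _ = a*(((b*inv b)*(inv a*a))*(b*inv b)) := by simp [mul_assoc]
  _ = a*(((inv a*a)*(b*inv b))*(b*inv b)) := by
      rw [hM.idem_comm _ _ (im_idem hM b) (im_idem' hM a)]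
  _ = (a*(inv a*a))*((b*inv b)*(b*inv b)) := by simp [mul_assoc]
  _ = (a*(inv a*a))*(b*inv b) := by rw [im_idem hM b]
  _ = (a*inv a*a)*(b*inv b) := by simp [mul_assoc]
  _ = a*(b*inv b) := by rw [hM.mul_inv_mul]

theorem im_L7 (hM : IsInverseMonoid M inv) (a b : M) :
    ((a*b)*inv (a*b))*(a*inv a) = (a*b)*inv (a*b) := by
  rw [im_inv_mul hM]
  calc ((a*b)*(inv b*inv a))*(a*inv a) = a*(b*(inv b*(inv a*a*inv a))) := by
        simp [mul_assoc]
  _ = a*(b*(inv b*inv a)) := by rw [hM.inv_mul_inv]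
  _ = (a*b)*(inv b*inv a) := by simp [mul_assoc]

theorem im_L8 (hM : IsInverseMonoid M inv) (a b c : M) :
    (((a*b*c)*inv (a*b*c))*a)*(b*inv b) = (a*((b*c)*inv (b*c)))*(b*inv b) := by
  have hk : ((inv b*inv a)*(a*b))*((inv b*inv a)*(a*b)) = (inv b*inv a)*(a*b) := by
    have := im_idem' hM (a*b); rwa [im_inv_mul hM] at this
  have hrhs : (a*((b*c)*inv (b*c)))*(b*inv b) = a*(b*((c*inv c)*inv b)) := by
    rw [im_inv_mul hM b c]
    calc (a*((b*c)*(inv c*inv b)))*(b*inv b)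
        = a*(b*((c*inv c)*(inv b*b*inv b))) := by simp [mul_assoc]
    _ = a*(b*((c*inv c)*inv b)) := by rw [hM.inv_mul_inv]
  rw [hrhs, im_inv_mul hM (a*b) c, im_inv_mul hM a b]
  calc (((a*b*c)*(inv c*(inv b*inv a)))*a)*(b*inv b)
      = a*(b*((c*inv c)*((inv b*inv a)*(a*b)))*inv b) := by simp [mul_assoc]
  _ = a*(b*(((inv b*inv a)*(a*b))*(c*inv c))*inv b) := by
      rw [hM.idem_comm _ _ (im_idem hM c) hk]
  _ = a*(((b*inv b)*(inv a*a))*((b*(c*inv c))*inv b)) := by simp [mul_assoc]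
  _ = a*(((inv a*a)*(b*inv b))*((b*(c*inv c))*inv b)) := by
      rw [hM.idem_comm _ _ (im_idem hM b) (im_idem' hM a)]
  _ = (a*inv a*a)*((b*inv b*b)*((c*inv c)*inv b)) := by simp [mul_assoc]
  _ = a*(b*((c*inv c)*inv b)) := by rw [hM.mul_inv_mul, hM.mul_inv_mul]

end Helpers

/-- the λ-semidirect product `N ⋉_α H` of inverse monoids is a monoid:
`(1,1)` is in the underlying set, the set is closed under the multiplication, the
multiplication is associative on the set, and `(1,1)` is a two-sided identity. -/
theorem lambdaSemidirect_isMonoid {N H : Type*} [Monoid N] [Monoid H]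
    (invN : N → N) (invH : H → H)
    (hN : IsInverseMonoid N invN) (hH : IsInverseMonoid H invH)
    (α : H → N → N) (hα : IsLambdaAction α) :
    lmem invH α ((1 : N), (1 : H)) ∧
    (∀ p q : N × H, lmem invH α p → lmem invH α q → lmem invH α (lmul invH α p q)) ∧
    (∀ p q t : N × H, lmem invH α p → lmem invH α q → lmem invH α t →
      lmul invH α (lmul invH α p q) t = lmul invH α p (lmul invH α q t)) ∧
    (∀ p : N × H, lmem invH α p →
      lmul invH α ((1 : N), (1 : H)) p = p ∧ lmul invH α p ((1 : N), (1 : H)) = p) := by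
  have inv_one : invH 1 = 1 := by
    have := hH.mul_inv_mul (1 : H); simpa using this
  refine ⟨?_, ?_, ?_, ?_⟩
  · -- (1,1) is in the set
    simp only [lmem, inv_one, one_mul, hα.act_one]
  · -- closure
    rintro ⟨n₁, h₁⟩ ⟨n₂, h₂⟩ hp hq
    simp only [lmem] at hp hq ⊢
    simp only [lmul]
    set e := (h₁*h₂) * invH (h₁*h₂) with he_def
    have he : e * e = e := im_idem hH (h₁*h₂)
    have hstep : α (e*h₁) n₂ = α h₁ n₂ := by
      conv_lhs => rw [← hq]
      conv_rhs => rw [← hq]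
      rw [← hα.act_comp (e*h₁) (h₂*invH h₂) n₂, ← hα.act_comp h₁ (h₂*invH h₂) n₂,
        he_def, im_L6 hH h₁ h₂]
    calc α e (α e n₁ * α h₁ n₂) = α e (α e n₁) * α e (α h₁ n₂) := hα.act_mul _ _ _
    _ = α (e*e) n₁ * α (e*h₁) n₂ := by
        rw [← hα.act_comp e e n₁, ← hα.act_comp e h₁ n₂]
    _ = α e n₁ * α h₁ n₂ := by rw [he, hstep]
  · -- associativity
    rintro ⟨n₁, h₁⟩ ⟨n₂, h₂⟩ ⟨n₃, h₃⟩ hp hq ht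
    simp only [lmem] at hp hq ht
    simp only [lmul, Prod.mk.injEq]
    refine ⟨?_, mul_assoc h₁ h₂ h₃⟩
    rw [← mul_assoc h₁ h₂ h₃]
    set E := (h₁*h₂*h₃) * invH (h₁*h₂*h₃) with hE_def
    set e₁₂ := (h₁*h₂) * invH (h₁*h₂) with he12_def
    set e₂₃ := (h₂*h₃) * invH (h₂*h₃) with he23_def
    have key1 : α (E*e₁₂) n₁ = α E n₁ := by
      rw [hE_def, he12_def, im_L7 hH (h₁*h₂) h₃]
    have key2 : α (E*h₁) n₂ = α (h₁*e₂₃) n₂ := by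
      conv_lhs => rw [← hq]
      conv_rhs => rw [← hq]
      rw [← hα.act_comp (E*h₁) (h₂*invH h₂) n₂, ← hα.act_comp (h₁*e₂₃) (h₂*invH h₂) n₂,
        hE_def, he23_def, im_L8 hH h₁ h₂ h₃]
    calc α E (α e₁₂ n₁ * α h₁ n₂) * α (h₁*h₂) n₃
        = (α E (α e₁₂ n₁) * α E (α h₁ n₂)) * α (h₁*h₂) n₃ := by rw [hα.act_mul]
    _ = (α (E*e₁₂) n₁ * α (E*h₁) n₂) * α (h₁*h₂) n₃ := by
        rw [← hα.act_comp E e₁₂ n₁, ← hα.act_comp E h₁ n₂]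
    _ = (α E n₁ * α (h₁*e₂₃) n₂) * α (h₁*h₂) n₃ := by rw [key1, key2]
    _ = α E n₁ * (α (h₁*e₂₃) n₂ * α (h₁*h₂) n₃) := by rw [mul_assoc]
    _ = α E n₁ * (α h₁ (α e₂₃ n₂) * α h₁ (α h₂ n₃)) := by
        rw [hα.act_comp h₁ e₂₃ n₂, hα.act_comp h₁ h₂ n₃]
    _ = α E n₁ * α h₁ (α e₂₃ n₂ * α h₂ n₃) := by rw [← hα.act_mul]
  · -- identity
    rintro ⟨n, h⟩ hp
    simp only [lmem] at hp
    constructor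
    · simp only [lmul, one_mul, hα.act_one]
      refine Prod.ext ?_ rfl
      show α (h * invH h) 1 * n = n
      calc α (h * invH h) 1 * n = α (h * invH h) 1 * α (h * invH h) n := by rw [hp]
      _ = α (h * invH h) (1 * n) := (hα.act_mul _ _ _).symm
      _ = α (h * invH h) n := by rw [one_mul]
      _ = n := hp
    · simp only [lmul, mul_one]
      refine Prod.ext ?_ rfl
      show α (h * invH h) n * α h 1 = n
      calc α (h * invH h) n * α h 1 = n * α h 1 := by rw [hp]
      _ = α (h * invH h) n * α h 1 := by rw [hp]
      _ = α h (α (invH h) n) * α h 1 := by rw [hα.act_comp h (invH h) n]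
      _ = α h (α (invH h) n * 1) := (hα.act_mul _ _ _).symm
      _ = α h (α (invH h) n) := by rw [mul_one]
      _ = α (h * invH h) n := (hα.act_comp h (invH h) n).symm
      _ = n := hp
end

section
/- Let N and H be inverse monoids and let α be an action of inverse monoids of H on N. Then the map s : H → N ⋉_α H defined by s(h) = (α (h * inv h) 1, h) is well defined (i.e. (α (h * inv h) 1, h) satisfies the defining condition of the λ-semidirect product) and is a monoid homomorphism: s(h₁) · s(h₂) = s(h₁ * h₂) for the λ-semidirect product multiplication, and s(1) = (1,1). -/
private lemma aux_inv_uniq {M : Type*} [Monoid M] {inv : M → M}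
    (hM : IsInverseMonoid M inv) {a x y : M}
    (hax : a * x * a = a) (hxa : x * a * x = x)
    (hay : a * y * a = a) (hya : y * a * y = y) : x = y := by
  have iax : (a*x)*(a*x) = a*x := by rw [← mul_assoc, hax]
  have iay : (a*y)*(a*y) = a*y := by rw [← mul_assoc, hay]
  have ixa : (x*a)*(x*a) = x*a := by rw [← mul_assoc, hxa]
  have iya : (y*a)*(y*a) = y*a := by rw [← mul_assoc, hya]
  have hx : x = x * a * y := by
    conv_lhs => rw [← hxa, ← hay]
    calc x * (a * y * a) * x = x * ((a*y)*(a*x)) := by simp [mul_assoc]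
    _ = x * ((a*x)*(a*y)) := by rw [hM.idem_comm _ _ iay iax]
    _ = (x*a*x) * (a*y) := by simp [mul_assoc]
    _ = x * a * y := by rw [hxa, ← mul_assoc]
  have hy : y = x * a * y := by
    conv_lhs => rw [← hya, ← hax]
    calc y * (a * x * a) * y = ((y*a)*(x*a))*y := by simp [mul_assoc]
    _ = ((x*a)*(y*a))*y := by rw [hM.idem_comm _ _ ixa iya]
    _ = (x*a)*(y*a*y) := by simp [mul_assoc]
    _ = x * a * y := by rw [hya]
  rw [hx, ← hy]

private lemma aux_inv_mul {M : Type*} [Monoid M] {inv : M → M}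
    (hM : IsInverseMonoid M inv) (a b : M) :
    inv (a * b) = inv b * inv a := by
  have ia : (inv a * a) * (inv a * a) = inv a * a := by
    rw [← mul_assoc, hM.inv_mul_inv]
  have ib : (b * inv b) * (b * inv b) = b * inv b := by
    rw [← mul_assoc, hM.mul_inv_mul]
  have h1 : (a*b) * (inv b * inv a) * (a*b) = a*b := by
    calc (a*b) * (inv b * inv a) * (a*b)
        = a * ((b * inv b) * (inv a * a)) * b := by simp [mul_assoc]
    _ = a * ((inv a * a) * (b * inv b)) * b := by rw [hM.idem_comm _ _ ib ia]
    _ = (a * inv a * a) * (b * inv b * b) := by simp [mul_assoc]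
    _ = a * b := by rw [hM.mul_inv_mul, hM.mul_inv_mul]
  have h2 : (inv b * inv a) * (a*b) * (inv b * inv a) = inv b * inv a := by
    calc (inv b * inv a) * (a*b) * (inv b * inv a)
        = inv b * ((inv a * a) * (b * inv b)) * inv a := by simp [mul_assoc]
    _ = inv b * ((b * inv b) * (inv a * a)) * inv a := by rw [hM.idem_comm _ _ ia ib]
    _ = (inv b * b * inv b) * (inv a * a * inv a) := by simp [mul_assoc]
    _ = inv b * inv a := by rw [hM.inv_mul_inv, hM.inv_mul_inv]
  exact aux_inv_uniq hM (hM.mul_inv_mul _) (hM.inv_mul_inv _) h1 h2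

/-- `s(h) = (α (h * inv h) 1, h)` is well defined into the λ-semidirect
product and is a monoid homomorphism. -/
theorem lambdaSemidirect_s_hom {N H : Type*} [Monoid N] [Monoid H]
    (invN : N → N) (invH : H → H)
    (hN : IsInverseMonoid N invN) (hH : IsInverseMonoid H invH)
    (α : H → N → N) (hα : IsLambdaAction α) :
    (∀ h : H, lmem invH α (α (h * invH h) (1 : N), h)) ∧
    (∀ h₁ h₂ : H, lmul invH α (α (h₁ * invH h₁) (1 : N), h₁) (α (h₂ * invH h₂) (1 : N), h₂)
      = (α ((h₁ * h₂) * invH (h₁ * h₂)) (1 : N), h₁ * h₂)) ∧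
    ((α ((1 : H) * invH 1) (1 : N), (1 : H)) = ((1 : N), (1 : H))) := by
  -- e_h := h * invH h is idempotent
  have eidem : ∀ h : H, (h * invH h) * (h * invH h) = h * invH h := fun h => by
    rw [← mul_assoc, hH.mul_inv_mul]
  -- α h 1 is idempotent in N
  have aidem : ∀ h : H, α h 1 * α h 1 = α h 1 := fun h => by
    rw [← hα.act_mul, one_mul]
  refine ⟨?_, ?_, ?_⟩
  · intro h
    show α (h * invH h) (α (h * invH h) 1) = α (h * invH h) 1
    rw [← hα.act_comp, eidem]
  · intro h₁ h₂
    unfold lmul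
    simp only [Prod.mk.injEq, and_true]
    set f := (h₁ * h₂) * invH (h₁ * h₂) with hf
    have hf' : f = (h₁ * (h₂ * invH h₂)) * invH h₁ := by
      rw [hf, aux_inv_mul hH]; simp [mul_assoc]
    -- f * e₁ = f
    have hfe : f * (h₁ * invH h₁) = f := by
      rw [hf']
      calc (h₁ * (h₂ * invH h₂)) * invH h₁ * (h₁ * invH h₁)
          = (h₁ * (h₂ * invH h₂)) * (invH h₁ * h₁ * invH h₁) := by simp [mul_assoc]
      _ = (h₁ * (h₂ * invH h₂)) * invH h₁ := by rw [hH.inv_mul_inv]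
    have st1 : α f (α (h₁ * invH h₁) 1) = α f 1 := by
      rw [← hα.act_comp, hfe]
    have st2 : α h₁ (α (h₂ * invH h₂) 1) = α (h₁ * (h₂ * invH h₂)) 1 :=
      (hα.act_comp h₁ (h₂ * invH h₂) 1).symm
    have key : α f 1 = α (h₁ * (h₂ * invH h₂)) (α (invH h₁) 1) := by
      rw [hf', hα.act_comp (h₁ * (h₂ * invH h₂)) (invH h₁)]
    have st4 : α (h₁ * (h₂ * invH h₂)) 1 * α f 1 = α f 1 := by
      conv_lhs => rw [key]
      rw [← hα.act_mul, one_mul, ← key]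
    rw [st1, st2, hN.idem_comm _ _ (aidem f) (aidem _), st4]
  · have h1 : invH (1 : H) = 1 := by
      have := hH.mul_inv_mul (1 : H); simpa using this
    rw [h1, mul_one, hα.act_one]
end

section
/- Let N and H be inverse monoids and let α be an action of inverse monoids of H on N. With k(n) = (n,1) and s(h) = (α (h * inv h) 1, h), the λ-semidirect product extension is weakly Schreier: for every element (n,h) of N ⋉_α H (i.e. every pair with α (h * inv h) n = n), one has k(n) · s(h) = (n,h), where · is the λ-semidirect product multiplication. -/
/-- the λ-semidirect product extension is weakly Schreier:
for every `(n,h)` in `N ⋉_α H`, `k(n) · s(h) = (n,h)`. -/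
theorem lambdaSemidirect_weaklySchreier {N H : Type*} [Monoid N] [Monoid H]
    (invN : N → N) (invH : H → H)
    (hN : IsInverseMonoid N invN) (hH : IsInverseMonoid H invH)
    (α : H → N → N) (hα : IsLambdaAction α) :
    ∀ (n : N) (h : H), lmem invH α (n, h) →
      lmul invH α (n, (1 : H)) (α (h * invH h) (1 : N), h) = (n, h) := by
  intro n h hm
  simp only [lmem] at hm
  simp only [lmul, one_mul, hα.act_one]
  rw [← hα.act_mul, mul_one, hm]
end

section
/- Let N and H be inverse monoids and let α be an action of inverse monoids of H on N. Let k(n) = (n,1), s(h) = (α (h * inv h) 1, h), and e(n,h) = h. Then e is the cokernel of k in the following concrete sense: for every monoid X and every map t : N ⋉_α H → X that is multiplicative for the λ-semidirect product multiplication, sends (1,1) to 1, and satisfies t(k(n)) = 1 for all n ∈ N, one has t(n,h) = t(s(h)) for every element (n,h) of N ⋉_α H; consequently t = (t ∘ s) ∘ e. -/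
/-- `e(n,h) = h` is the cokernel of `k(n) = (n,1)`: any multiplicative,
unit-preserving map `t` out of the λ-semidirect product killing `k` satisfies
`t(n,h) = t(s(h))`, i.e. `t = (t ∘ s) ∘ e`. -/
theorem lambdaSemidirect_e_cokernel {N H : Type*} [Monoid N] [Monoid H]
    (invN : N → N) (invH : H → H)
    (hN : IsInverseMonoid N invN) (hH : IsInverseMonoid H invH)
    (α : H → N → N) (hα : IsLambdaAction α) :
    ∀ (X : Type*) [Monoid X] (t : N × H → X),
      (∀ p q : N × H, lmem invH α p → lmem invH α q → t (lmul invH α p q) = t p * t q) →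
      t ((1 : N), (1 : H)) = 1 →
      (∀ n : N, t (n, (1 : H)) = 1) →
      ∀ p : N × H, lmem invH α p → t p = t (α (p.2 * invH p.2) (1 : N), p.2) := by
  intro X _ t hmul _ hk p hp
  obtain ⟨n, h⟩ := p
  simp only [lmem] at hp
  have hinv1 : invH (1 : H) = 1 := by
    have := hH.mul_inv_mul 1
    simpa using this
  have hmem1 : lmem invH α (n, (1 : H)) := by
    simp [lmem, hinv1, hα.act_one]
  have hE : h * invH h * (h * invH h) = h * invH h := by
    rw [← mul_assoc, hH.mul_inv_mul]
  have hmems : lmem invH α (α (h * invH h) (1 : N), h) := by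
    simp only [lmem]
    rw [← hα.act_comp, hE]
  have key : lmul invH α (n, (1 : H)) (α (h * invH h) (1 : N), h) = (n, h) := by
    simp only [lmul, one_mul, hα.act_one]
    have : α (h * invH h) n * α (h * invH h) 1 = n := by
      rw [← hα.act_mul, mul_one, hp]
    rw [this]
  have := hmul _ _ hmem1 hmems
  rw [key, hk n, one_mul] at this
  exact this
end

section
/- Let N and H be inverse monoids and let α be an action of inverse monoids of H on N. Let k(n) = (n,1) and s(h) = (α (h * inv h) 1, h). Then for all n ∈ N and h ∈ H, k(n) · s(h) = (α (h * inv h) n, h) in the λ-semidirect product; in particular the pairs (n,h) and (α (h * inv h) n, h) are identified in the admissible equivalence relation of the associated weakly Schreier extension (defined by (n,h) ∼ (n',h') iff k(n)·s(h) = k(n')·s(h')), so every equivalence class [n,h] has the canonical representative (α (h * inv h) n, h). -/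
/-- `k(n) · s(h) = (α (h * inv h) n, h)` in the λ-semidirect product;
hence `(n,h)` and `(α (h * inv h) n, h)` are identified in the admissible equivalence
relation `(n,h) ∼ (n',h') ↔ k(n)·s(h) = k(n')·s(h')`, giving canonical representatives. -/
theorem lambdaSemidirect_canonical_rep {N H : Type*} [Monoid N] [Monoid H]
    (invN : N → N) (invH : H → H)
    (hN : IsInverseMonoid N invN) (hH : IsInverseMonoid H invH)
    (α : H → N → N) (hα : IsLambdaAction α) :
    (∀ (n : N) (h : H),
      lmul invH α (n, (1 : H)) (α (h * invH h) (1 : N), h) = (α (h * invH h) n, h)) ∧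
    (∀ (n : N) (h : H),
      lmul invH α (n, (1 : H)) (α (h * invH h) (1 : N), h)
        = lmul invH α (α (h * invH h) n, (1 : H)) (α (h * invH h) (1 : N), h)) := by
  have key : ∀ (n : N) (h : H),
      lmul invH α (n, (1 : H)) (α (h * invH h) (1 : N), h) = (α (h * invH h) n, h) := by
    intro n h
    have e1 : (1 : H) * h = h := one_mul h
    simp only [lmul, e1]
    refine Prod.ext ?_ rfl
    simp only []
    rw [hα.act_one, ← hα.act_mul, mul_one]
  refine ⟨key, fun n h => ?_⟩
  rw [key, key]
  have idem : (h * invH h) * (h * invH h) = h * invH h := by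
    calc (h * invH h) * (h * invH h) = h * (invH h * h * invH h) := by
          simp [mul_assoc]
      _ = h * invH h := by rw [hH.inv_mul_inv]
  rw [← hα.act_comp, idem]
end

section
/- Let N and H be inverse monoids and let α be an action of inverse monoids of H on N. Let k(n) = (n,1) and s(h) = (α (h * inv h) 1, h). Then the compatible action of the associated weakly Schreier extension obtained from the Schreier retraction π₁ (first projection) is the original action α: for all n ∈ N and h ∈ H, the first component of s(h) · k(n) in the λ-semidirect product equals α h n; equivalently (α (h * inv h) 1) * (α h n) = α h n. -/
/-- the compatible action obtained from the Schreier retraction `π₁` is the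
original action: the first component of `s(h) · k(n)` is `α h n`; equivalently
`(α (h * inv h) 1) * (α h n) = α h n`. -/
theorem lambdaSemidirect_compatible_action {N H : Type*} [Monoid N] [Monoid H]
    (invN : N → N) (invH : H → H)
    (hN : IsInverseMonoid N invN) (hH : IsInverseMonoid H invH)
    (α : H → N → N) (hα : IsLambdaAction α) :
    (∀ (n : N) (h : H),
      (lmul invH α (α (h * invH h) (1 : N), h) (n, (1 : H))).1 = α h n) ∧
    (∀ (n : N) (h : H), (α (h * invH h) (1 : N)) * α h n = α h n) := by
  have key : ∀ (n : N) (h : H), (α (h * invH h) (1 : N)) * α h n = α h n := by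
    intro n h
    have h1 : α h n = α (h * invH h) (α h n) := by
      rw [← hα.act_comp]
      have : h * invH h * h = h := hH.mul_inv_mul h
      rw [this]
    calc α (h * invH h) (1 : N) * α h n
        = α (h * invH h) (1 : N) * α (h * invH h) (α h n) := by rw [← h1]
      _ = α (h * invH h) (1 * α h n) := by rw [hα.act_mul]
      _ = α (h * invH h) (α h n) := by rw [one_mul]
      _ = α h n := h1.symm
  refine ⟨fun n h => ?_, key⟩
  have idem : (h * invH h) * (h * invH h) = h * invH h := by
    conv_lhs => rw [← mul_assoc, hH.mul_inv_mul]
  simp only [lmul, mul_one]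
  rw [← hα.act_comp, idem]
  exact key n h
end

section
/- Let N and H be inverse monoids and let α and β be actions of inverse monoids of H on N. Then α ≤ β (in the preorder induced from the preorder of weakly Schreier extensions) if and only if for all n ∈ N and h ∈ H, β (h * inv h) (α h n) = β h n. -/
/-- The order on actions of inverse monoids induced by the preorder of
weakly Schreier extensions. -/
def ActLE {H N : Type*} [Monoid H] [Monoid N] (invH : H → H) (α β : H → N → N) : Prop :=
  (∀ (n₁ n₂ : N) (h : H), α (h * invH h) n₁ = α (h * invH h) n₂ →
    β (h * invH h) n₁ = β (h * invH h) n₂) ∧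
  (∀ (n : N) (h : H), β (h * invH h) (α h n) = β (h * invH h) (β h n))

/-- for actions of inverse monoids `α, β` of `H` on `N`,
`α ≤ β` iff `β (h * inv h) (α h n) = β h n` for all `n, h`. -/
theorem actLE_iff {N H : Type*} [Monoid N] [Monoid H]
    (invN : N → N) (invH : H → H)
    (hN : IsInverseMonoid N invN) (hH : IsInverseMonoid H invH)
    (α β : H → N → N) (hα : IsLambdaAction α) (hβ : IsLambdaAction β) :
    ActLE invH α β ↔ ∀ (n : N) (h : H), β (h * invH h) (α h n) = β h n := by
  constructor
  · rintro ⟨_, h2⟩ n h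
    have he : h * invH h * h = h := hH.mul_inv_mul h
    calc β (h * invH h) (α h n) = β (h * invH h) (β h n) := h2 n h
      _ = β (h * invH h * h) n := (hβ.act_comp _ _ _).symm
      _ = β h n := by rw [he]
  · intro key
    constructor
    · intro n₁ n₂ h heq
      have := key n₁ (h * invH h)
      rw [heq, key n₂ (h * invH h)] at this
      exact this.symm
    · intro n h
      have he : h * invH h * h = h := hH.mul_inv_mul h
      rw [key n h, ← hβ.act_comp, he]
end

section
/- Let N, G₁, G₂, H be monoids and let k₁ : N →* G₁, e₁ : G₁ →* H, s₁ : H →* G₁ and k₂ : N →* G₂, e₂ : G₂ →* H, s₂ : H →* G₂ be monoid homomorphisms with e₁ ∘ s₁ = id and e₂ ∘ s₂ = id, and suppose the first extension is weakly Schreier: for every g ∈ G₁ there exists n ∈ N with g = k₁(n) * s₁(e₁(g)). If f, f' : G₁ →* G₂ are monoid homomorphisms with f ∘ k₁ = k₂ = f' ∘ k₁ and f ∘ s₁ = s₂ = f' ∘ s₁, then f = f'. (Hence the category of weakly Schreier extensions of H by N is a preorder.) -/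
/-- a morphism of weakly Schreier extensions is unique, hence the
category of weakly Schreier extensions of `H` by `N` is a preorder. -/
theorem weaklySchreier_morphism_unique {N G₁ G₂ H : Type*}
    [Monoid N] [Monoid G₁] [Monoid G₂] [Monoid H]
    (k₁ : N →* G₁) (e₁ : G₁ →* H) (s₁ : H →* G₁)
    (k₂ : N →* G₂) (e₂ : G₂ →* H) (s₂ : H →* G₂)
    (hes₁ : ∀ h : H, e₁ (s₁ h) = h) (hes₂ : ∀ h : H, e₂ (s₂ h) = h)
    (hws : ∀ g : G₁, ∃ n : N, g = k₁ n * s₁ (e₁ g))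
    (f f' : G₁ →* G₂)
    (hfk : ∀ n : N, f (k₁ n) = k₂ n) (hf'k : ∀ n : N, f' (k₁ n) = k₂ n)
    (hfs : ∀ h : H, f (s₁ h) = s₂ h) (hf's : ∀ h : H, f' (s₁ h) = s₂ h) :
    f = f' := by
  ext g
  obtain ⟨n, hn⟩ := hws g
  rw [hn, map_mul, map_mul, hfk, hf'k, hfs, hf's]
end

section
/- Let N and H be frames and let f : H → N satisfy f(⊤) = ⊤ and f(h ⊓ h') = f(h) ⊓ f(h'), and let α h n = f(h) ⊓ n be the induced action of inverse monoids (with N, H viewed as monoids under ⊓ and inv a = a). Then the λ-semidirect product N ⋉_α H coincides with the Artin glueing Gl(f): (i) a pair (n,h) satisfies the defining condition α (h ⊓ h) n = n if and only if n ≤ f(h); and (ii) for pairs with n₁ ≤ f(h₁) and n₂ ≤ f(h₂), the λ-semidirect product multiplication ((α ((h₁⊓h₂) ⊓ (h₁⊓h₂)) n₁) ⊓ (α h₁ n₂), h₁ ⊓ h₂) equals the componentwise meet (n₁ ⊓ n₂, h₁ ⊓ h₂). -/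
/-- for frames `N, H` and a finite-meet-preserving `f : H → N`, with the
action `α h n = f h ⊓ n`, the λ-semidirect product `N ⋉_α H` coincides with the Artin
glueing `Gl(f)`: the defining condition is `n ≤ f h`, and the λ-semidirect product
multiplication is the componentwise meet. -/
theorem lambdaSemidirect_eq_artinGlueing {N H : Type*} [Order.Frame N] [Order.Frame H]
    (f : H → N) (hf_top : f ⊤ = ⊤) (hf_inf : ∀ h h' : H, f (h ⊓ h') = f h ⊓ f h') :
    (∀ (n : N) (h : H), f (h ⊓ h) ⊓ n = n ↔ n ≤ f h) ∧
    (∀ (n₁ : N) (h₁ : H) (n₂ : N) (h₂ : H), n₁ ≤ f h₁ → n₂ ≤ f h₂ →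
      (((f ((h₁ ⊓ h₂) ⊓ (h₁ ⊓ h₂)) ⊓ n₁) ⊓ (f h₁ ⊓ n₂), h₁ ⊓ h₂) : N × H)
        = (n₁ ⊓ n₂, h₁ ⊓ h₂)) := by
  constructor
  · intro n h
    rw [inf_idem, inf_eq_right]
  · intro n₁ h₁ n₂ h₂ h1 h2
    simp only [inf_idem, hf_inf, Prod.mk.injEq, and_true]
    have : f h₁ ⊓ f h₂ ⊓ n₁ ⊓ (f h₁ ⊓ n₂) = (f h₁ ⊓ n₁) ⊓ (f h₁ ⊓ (f h₂ ⊓ n₂)) := by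
      ac_rfl
    rw [this, inf_of_le_right h1, inf_of_le_right h2, ← inf_assoc, inf_of_le_left h1]
end

section
/- Let N and H be inverse monoids and let f, g : H →* N be monoid homomorphisms whose images consist of central idempotents of N, with Artin-like actions α_f, α_g, α_{f·g} where α_{f·g} h n = f(h)*g(h)*n. If β is any action of inverse monoids of H on N with α_f ≤ β, α_g ≤ β, and β ≤ α_{f·g} in the order on actions, then also α_{f·g} ≤ β; hence β and α_{f·g} determine the same weakly Schreier extension, and α_{f·g} is the join of α_f and α_g. -/

lemma inv_of_unique {M : Type*} [Monoid M] {inv : M → M} (hM : IsInverseMonoid M inv)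
    {a x : M} (h1 : a * x * a = a) (h2 : x * a * x = x) : x = inv a := by
  set y := inv a with hy
  have hy1 : a * y * a = a := hM.mul_inv_mul a
  have hy2 : y * a * y = y := hM.inv_mul_inv a
  have eax : (a * x) * (a * x) = a * x := by rw [← mul_assoc, h1]
  have eay : (a * y) * (a * y) = a * y := by rw [← mul_assoc, hy1]
  have exa : (x * a) * (x * a) = x * a := by rw [← mul_assoc, h2]
  have eya : (y * a) * (y * a) = y * a := by rw [← mul_assoc, hy2]
  have c1 : (a * y) * (a * x) = (a * x) * (a * y) := hM.idem_comm _ _ eay eax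
  have c2 : (y * a) * (x * a) = (x * a) * (y * a) := hM.idem_comm _ _ eya exa
  have hx : x = x * a * y := by
    calc x = x * a * x := h2.symm
      _ = x * (a * y * a) * x := by rw [hy1]
      _ = x * ((a * y) * (a * x)) := by simp [mul_assoc]
      _ = x * ((a * x) * (a * y)) := by rw [c1]
      _ = (x * a * x) * (a * y) := by simp [mul_assoc]
      _ = x * a * y := by rw [h2, mul_assoc]
  have hyy : y = x * a * y := by
    calc y = y * a * y := hy2.symm
      _ = y * (a * x * a) * y := by rw [h1]
      _ = ((y * a) * (x * a)) * y := by simp [mul_assoc]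
      _ = ((x * a) * (y * a)) * y := by rw [c2]
      _ = x * a * (y * a * y) := by simp [mul_assoc]
      _ = x * a * y := by rw [hy2]
  rw [hx, ← hyy]

lemma inv_of_idem {M : Type*} [Monoid M] {inv : M → M} (hM : IsInverseMonoid M inv)
    {e : M} (he : e * e = e) : inv e = e :=
  (inv_of_unique hM (by rw [he, he]) (by rw [he, he])).symm

/-- if an action `β` satisfies `α_f ≤ β`, `α_g ≤ β` and `β ≤ α_{f·g}`,
then also `α_{f·g} ≤ β`; hence `α_{f·g}` is the join of `α_f` and `α_g`. -/
theorem artinLike_join {N H : Type*} [Monoid N] [Monoid H]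
    (invN : N → N) (invH : H → H)
    (hN : IsInverseMonoid N invN) (hH : IsInverseMonoid H invH)
    (f g : H →* N)
    (hf_idem : ∀ h : H, f h * f h = f h)
    (hg_idem : ∀ h : H, g h * g h = g h)
    (hf_central : ∀ (h : H) (n : N), f h * n = n * f h)
    (hg_central : ∀ (h : H) (n : N), g h * n = n * g h)
    (β : H → N → N) (hβ : IsLambdaAction β)
    (hfβ : ActLE invH (fun (h : H) (n : N) => f h * n) β)
    (hgβ : ActLE invH (fun (h : H) (n : N) => g h * n) β)
    (hβfg : ActLE invH β (fun (h : H) (n : N) => f h * g h * n)) :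
    ActLE invH (fun (h : H) (n : N) => f h * g h * n) β := by
  have he : ∀ h : H, (h * invH h) * (h * invH h) = h * invH h := fun h => by
    rw [← mul_assoc, mul_assoc h (invH h) h, ← mul_assoc h (invH h) h, hH.mul_inv_mul]
  have key : ∀ (n : N) (h : H),
      β (h * invH h) (g (h * invH h) * n) = β (h * invH h) n := fun n h => by
    have h2 := hgβ.2 n (h * invH h)
    simp only [inv_of_idem hH (he h), he h] at h2
    rw [h2, ← hβ.act_comp, he h]
  have part1 : ∀ (n₁ n₂ : N) (h : H),
      f (h * invH h) * g (h * invH h) * n₁ = f (h * invH h) * g (h * invH h) * n₂ →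
      β (h * invH h) n₁ = β (h * invH h) n₂ := by
    intro n₁ n₂ h hyp
    have hyp' : f (h * invH h) * (g (h * invH h) * n₁)
        = f (h * invH h) * (g (h * invH h) * n₂) := by
      rw [← mul_assoc, ← mul_assoc, hyp]
    have := hfβ.1 _ _ h hyp'
    rwa [key, key] at this
  exact ⟨part1, fun n h => part1 _ _ h (hβfg.2 n h).symm⟩
end

section
/- Let N be an inverse monoid, let u, u' ∈ N be idempotents, and let H be an inverse monoid such that h₁ * h₂ = 1 implies h₁ = 1 and h₂ = 1. Define actions α_u and α_{u'} of H on N by α_u 1 n = n and α_u h n = u for h ≠ 1 (similarly for u'). Then α_u ≤ α_{u'} and α_{u'} ≤ α_u in the order on actions; hence the two actions (which are distinct whenever u ≠ u') determine the same weakly Schreier extension. -/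
theorem constant_idem_actLE {N H : Type*} [Monoid N] [Monoid H]
    (invH : H → H)
    (u u' : N)
    (hH1 : ∀ h₁ h₂ : H, h₁ * h₂ = 1 → h₁ = 1 ∧ h₂ = 1)
    (αu αu' : H → N → N)
    (hαu_one : ∀ n : N, αu 1 n = n)
    (hαu_ne : ∀ h : H, h ≠ 1 → ∀ n : N, αu h n = u)
    (hαu'_one : ∀ n : N, αu' 1 n = n)
    (hαu'_ne : ∀ h : H, h ≠ 1 → ∀ n : N, αu' h n = u') :
    ActLE invH αu αu' := by
  constructor
  · intro n₁ n₂ h heq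
    by_cases hc : h * invH h = 1
    · obtain ⟨h1, _⟩ := hH1 _ _ hc
      rw [hc, hαu'_one, hαu'_one]
      rw [hc, hαu_one, hαu_one] at heq
      exact heq
    · rw [hαu'_ne _ hc, hαu'_ne _ hc]
  · intro n h
    by_cases hc : h * invH h = 1
    · obtain ⟨h1, _⟩ := hH1 _ _ hc
      rw [h1, hαu_one, hαu'_one]
    · rw [hαu'_ne _ hc, hαu'_ne _ hc]

/-- for idempotents `u, u'` of `N`, the actions `α_u` and `α_{u'}` satisfy
`α_u ≤ α_{u'}` and `α_{u'} ≤ α_u`, hence determine the same weakly Schreier extension. -/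
theorem constant_idem_actions_equivalent {N H : Type*} [Monoid N] [Monoid H]
    (invN : N → N) (invH : H → H)
    (hN : IsInverseMonoid N invN) (hH : IsInverseMonoid H invH)
    (u u' : N) (hu : u * u = u) (hu' : u' * u' = u')
    (hH1 : ∀ h₁ h₂ : H, h₁ * h₂ = 1 → h₁ = 1 ∧ h₂ = 1)
    (αu αu' : H → N → N)
    (hαu_one : ∀ n : N, αu 1 n = n)
    (hαu_ne : ∀ h : H, h ≠ 1 → ∀ n : N, αu h n = u)
    (hαu'_one : ∀ n : N, αu' 1 n = n)
    (hαu'_ne : ∀ h : H, h ≠ 1 → ∀ n : N, αu' h n = u') :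
    ActLE invH αu αu' ∧ ActLE invH αu' αu :=
  ⟨constant_idem_actLE invH u u' hH1 αu αu' hαu_one hαu_ne hαu'_one hαu'_ne,
   constant_idem_actLE invH u' u hH1 αu' αu hαu'_one hαu'_ne hαu_one hαu_ne⟩
end

section
/- Let N and H be monoids, let E be an admissible equivalence relation on N × H, and let α : H → N → N be an action compatible with E. Then the operation [n,h] · [n',h'] = [n * α h n', h * h'] on the quotient (N × H)/E is well defined (if (n₁,h₁) ∼ (n₁',h₁') and (n₂,h₂) ∼ (n₂',h₂') then (n₁ * α h₁ n₂, h₁ * h₂) ∼ (n₁' * α h₁' n₂', h₁' * h₂')), and makes (N × H)/E a monoid with identity [1,1]. -/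
/-- An admissible equivalence relation on `N × H`. -/
structure IsAdmissible {N H : Type*} [Monoid N] [Monoid H]
    (r : N × H → N × H → Prop) : Prop where
  fst_cancel : ∀ n n' : N, r (n, 1) (n', 1) → n = n'
  snd_eq : ∀ (n n' : N) (h h' : H), r (n, h) (n', h') → h = h'
  mul_left : ∀ (n₁ n₂ : N) (h : H), r (n₁, h) (n₂, h) →
    ∀ x : N, r (x * n₁, h) (x * n₂, h)
  mul_right : ∀ (n₁ n₂ : N) (h : H), r (n₁, h) (n₂, h) →
    ∀ y : H, r (n₁, h * y) (n₂, h * y)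

/-- An action compatible with an admissible equivalence relation on `N × H`. -/
structure IsCompatibleAction {N H : Type*} [Monoid N] [Monoid H]
    (r : N × H → N × H → Prop) (α : H → N → N) : Prop where
  comp1 : ∀ (n₁ n₂ : N) (h : H), r (n₁, h) (n₂, h) →
    ∀ n : N, r (n₁ * α h n, h) (n₂ * α h n, h)
  comp2 : ∀ (n n' : N) (h' : H), r (n, h') (n', h') →
    ∀ h : H, r (α h n, h * h') (α h n', h * h')
  comp3 : ∀ (h : H) (n n' : N), r (α h (n * n'), h) (α h n * α h n', h)
  comp4 : ∀ (h h' : H) (n : N), r (α (h * h') n, h * h') (α h (α h' n), h * h')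
  comp5 : ∀ h : H, r (α h 1, h) ((1 : N), h)
  comp6 : ∀ n : N, r (α 1 n, (1 : H)) (n, (1 : H))

/-- for an admissible equivalence relation `r` on `N × H` and a
compatible action `α`, the multiplication `[n,h]·[n',h'] = [n * α h n', h * h']` on
the quotient is well defined and makes it a monoid with identity `[1,1]`
(stated on representatives: the product respects `r`, is associative up to `r`,
and `(1,1)` is a two-sided identity up to `r`). -/
theorem weakSemidirect_monoid {N H : Type*} [Monoid N] [Monoid H]
    (r : N × H → N × H → Prop) (hr : Equivalence r)
    (hadm : IsAdmissible r)
    (α : H → N → N) (hcomp : IsCompatibleAction r α) :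
    (∀ (n₁ n₁' n₂ n₂' : N) (h₁ h₁' h₂ h₂' : H),
      r (n₁, h₁) (n₁', h₁') → r (n₂, h₂) (n₂', h₂') →
      r (n₁ * α h₁ n₂, h₁ * h₂) (n₁' * α h₁' n₂', h₁' * h₂')) ∧
    (∀ (n₁ n₂ n₃ : N) (h₁ h₂ h₃ : H),
      r ((n₁ * α h₁ n₂) * α (h₁ * h₂) n₃, (h₁ * h₂) * h₃)
        (n₁ * α h₁ (n₂ * α h₂ n₃), h₁ * (h₂ * h₃))) ∧
    (∀ (n : N) (h : H), r ((1 : N) * α 1 n, (1 : H) * h) (n, h)) ∧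
    (∀ (n : N) (h : H), r (n * α h 1, h * (1 : H)) (n, h)) := by
  refine ⟨?_, ?_, ?_, ?_⟩
  · intro n₁ n₁' n₂ n₂' h₁ h₁' h₂ h₂' r1 r2
    obtain rfl := hadm.snd_eq _ _ _ _ r1
    obtain rfl := hadm.snd_eq _ _ _ _ r2
    have s1 : r (n₁ * α h₁ n₂, h₁ * h₂) (n₁ * α h₁ n₂', h₁ * h₂) :=
      hadm.mul_left _ _ _ (hcomp.comp2 _ _ _ r2 h₁) n₁
    have s2 : r (n₁ * α h₁ n₂', h₁ * h₂) (n₁' * α h₁ n₂', h₁ * h₂) :=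
      hadm.mul_right _ _ _ (hcomp.comp1 _ _ _ r1 n₂') h₂
    exact hr.trans s1 s2
  · intro n₁ n₂ n₃ h₁ h₂ h₃
    have s1 : r ((n₁ * α h₁ n₂) * α (h₁ * h₂) n₃, (h₁ * h₂) * h₃)
        ((n₁ * α h₁ n₂) * (α h₁ (α h₂ n₃)), (h₁ * h₂) * h₃) :=
      hadm.mul_right _ _ _ (hadm.mul_left _ _ _ (hcomp.comp4 h₁ h₂ n₃) _) h₃
    have s2 : r (n₁ * α h₁ (n₂ * α h₂ n₃), h₁) (n₁ * (α h₁ n₂ * α h₁ (α h₂ n₃)), h₁) :=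
      hadm.mul_left _ _ _ (hcomp.comp3 h₁ n₂ (α h₂ n₃)) n₁
    have s2' : r (n₁ * α h₁ (n₂ * α h₂ n₃), h₁ * (h₂ * h₃))
        (n₁ * (α h₁ n₂ * α h₁ (α h₂ n₃)), h₁ * (h₂ * h₃)) :=
      hadm.mul_right _ _ _ s2 (h₂ * h₃)
    rw [mul_assoc h₁ h₂ h₃] at s1 ⊢
    rw [← mul_assoc n₁ (α h₁ n₂)] at s2'
    exact hr.trans s1 (hr.symm s2')
  · intro n h
    have s1 : r ((1 : N) * α 1 n, (1 : H)) (1 * n, 1) :=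
      hadm.mul_left _ _ _ (hcomp.comp6 n) 1
    have s2 := hadm.mul_right _ _ _ s1 h
    rw [one_mul n] at s2
    simpa using s2
  · intro n h
    have s1 : r (n * α h 1, h) (n * 1, h) :=
      hadm.mul_left _ _ _ (hcomp.comp5 h) n
    rw [mul_one] at s1
    simpa using hadm.mul_right _ _ _ s1 1
end

section
/- Let N and H be monoids, let E be an admissible equivalence relation on N × H, and let α : H → N → N be an action compatible with E, so that the quotient G = (N × H)/E is a monoid under [n,h] · [n',h'] = [n * α h n', h * h'] with identity [1,1]. Then the maps k : N → G, k(n) = [n,1], e : G → H, e([n,h]) = h, and s : H → G, s(h) = [1,h] are monoid homomorphisms; e ∘ s = id; k is injective and its image equals {g ∈ G : e(g) = 1}; for every monoid X and every monoid homomorphism t : G → X with t ∘ k trivial one has t = (t ∘ s) ∘ e; and the extension is weakly Schreier: every g = [n,h] ∈ G satisfies g = k(n) · s(e(g)). -/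
/-- for the quotient monoid `G = (N × H)/E` of a pair `(E, α)` (admissible
equivalence relation and compatible action), the maps `k(n) = [n,1]`, `e([n,h]) = h` and
`s(h) = [1,h]` are monoid homomorphisms, `e ∘ s = id`, `k` is injective with image the
kernel of `e`, `e` is the cokernel of `k`, and the extension is weakly Schreier
(all stated on representatives via `r`). -/
theorem weakSemidirect_weaklySchreier_extension {N H : Type*} [Monoid N] [Monoid H]
    (r : N × H → N × H → Prop) (hr : Equivalence r)
    (hadm : IsAdmissible r)
    (α : H → N → N) (hcomp : IsCompatibleAction r α) :
    -- k is a monoid homomorphism: k n₁ · k n₂ = k (n₁ * n₂) (and k 1 = [1,1] trivially)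
    (∀ n₁ n₂ : N, r (n₁ * α 1 n₂, (1 : H) * 1) (n₁ * n₂, (1 : H))) ∧
    -- e is well defined on classes (hence a monoid homomorphism, and e ∘ s = id)
    (∀ p q : N × H, r p q → p.2 = q.2) ∧
    -- s is a monoid homomorphism: s h₁ · s h₂ = s (h₁ * h₂)
    (∀ h₁ h₂ : H, r ((1 : N) * α h₁ 1, h₁ * h₂) ((1 : N), h₁ * h₂)) ∧
    -- k is injective
    (∀ n n' : N, r (n, (1 : H)) (n', (1 : H)) → n = n') ∧
    -- the image of k is {g : e g = 1}
    (∀ (n : N) (h : H), (∃ n' : N, r (n', (1 : H)) (n, h)) ↔ h = 1) ∧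
    -- e is the cokernel of k: any monoid map t on the quotient killing k factors as (t ∘ s) ∘ e
    (∀ (X : Type*) [Monoid X] (t : N × H → X),
      (∀ p q : N × H, r p q → t p = t q) →
      (∀ p q : N × H, t (p.1 * α p.2 q.1, p.2 * q.2) = t p * t q) →
      t ((1 : N), (1 : H)) = 1 →
      (∀ n : N, t (n, (1 : H)) = 1) →
      ∀ p : N × H, t p = t ((1 : N), p.2)) ∧
    -- the extension is weakly Schreier: [n,h] = k n · s h
    (∀ (n : N) (h : H), r (n * α 1 1, (1 : H) * h) (n, h)) := by

  have key : ∀ (n : N) (h : H), r (n * α 1 1, (1 : H) * h) (n, h) := by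
    intro n h
    have h1 := hcomp.comp6 1
    have h2 := hadm.mul_left _ _ _ h1 n
    rw [mul_one] at h2
    have h3 := hadm.mul_right _ _ _ h2 h
    rw [one_mul] at h3 ⊢
    exact h3
  refine ⟨?_, ?_, ?_, ?_, ?_, ?_, key⟩
  · intro n₁ n₂
    have h1 := hcomp.comp6 n₂
    have h2 := hadm.mul_left _ _ _ h1 n₁
    rw [one_mul]; exact h2
  · intro p q hpq
    exact hadm.snd_eq _ _ _ _ hpq
  · intro h₁ h₂
    have h1 := hcomp.comp5 h₁
    have h2 := hadm.mul_right _ _ _ h1 h₂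
    rw [one_mul]; exact h2
  · intro n n' hnn'
    exact hadm.fst_cancel _ _ hnn'
  · intro n h
    constructor
    · rintro ⟨n', hn'⟩
      exact (hadm.snd_eq _ _ _ _ hn').symm
    · rintro rfl
      exact ⟨n, hr.refl _⟩
  · intro X _ t hwd hmul _ hk p
    obtain ⟨n, h⟩ := p
    have h1 : t (n * α 1 1, (1 : H) * h) = t (n, 1) * t (1, h) := hmul (n, 1) (1, h)
    have h2 := hwd _ _ (key n h)
    rw [h2, hk, one_mul] at h1
    exact h1
end
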